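/- Let k be a field and A a ⟨σ⟩-Galois algebra over k of dimension r. The map φ : A[x,σ] → End_k(A) sending Σ_i a_i x^i to the k-linear endomorphism Σ_i L_{a_i} ∘ σ^i of A, where L_a denotes multiplication by a on A, is a surjective homomorphism of k-algebras whose kernel is the two-sided ideal of A[x,σ] generated by x^r − 1. -/
import Mathlib


open scoped TensorProduct

universe u v

structure IsGaloisAlgebra (k A : Type u) [Field k] [CommRing A] [Algebra k A]
    (σ : A ≃ₐ[k] A) : Prop where
  formallyEtale : Algebra.FormallyEtale k A
  finiteDimensional : FiniteDimensional k A
  fixed_iff : ∀ a : A, σ a = a ↔ a ∈ Set.range (algebraMap k A)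
  orderOf_eq : orderOf σ = Module.finrank k A
  one_lt_finrank : 1 < Module.finrank k A


/-- The `k`-linear operator on `ℕ →₀ A` representing the skew monomial `a·xⁱ` in `A[x,σ]`:
it sends `single j b` to `single (j+i) (a * σ^i b)`.  (The skew polynomial ring acts
faithfully on `ℕ →₀ A`, the module of coefficient sequences, by skewed multiplication.) -/
noncomputable def skewOp (k A : Type*) [Field k] [CommRing A] [Algebra k A]
    (σ : A ≃ₐ[k] A) (a : A) (i : ℕ) : Module.End k (ℕ →₀ A) :=
  (Finsupp.lmapDomain A k (· + i)) ∘ₗ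
    (Finsupp.mapRange.linearMap (((Algebra.lmul k A) a) ∘ₗ ((σ ^ i : A ≃ₐ[k] A)).toLinearMap))

/-- The skew polynomial ring `A[x,σ]`, realized faithfully as the `k`-subalgebra of
`End_k (ℕ →₀ A)` generated by the operators of the skew monomials `a·xⁱ` (equivalently,
the `k`-span of these operators, since `skewOp a i ∘ skewOp b j = skewOp (a·σⁱ(b)) (i+j)`). -/
noncomputable def SkewPolyAlg (k A : Type*) [Field k] [CommRing A] [Algebra k A]
    (σ : A ≃ₐ[k] A) : Subalgebra k (Module.End k (ℕ →₀ A)) :=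
  Algebra.adjoin k (Set.range fun p : A × ℕ => skewOp k A σ p.1 p.2)

noncomputable instance (k A : Type*) [Field k] [CommRing A] [Algebra k A] (σ : A ≃ₐ[k] A) :
    Ring ↥(SkewPolyAlg k A σ) :=
  letI : Ring (Module.End k (ℕ →₀ A)) := inferInstance
  inferInstance

/-- The element `x` of the skew polynomial ring `A[x,σ]`. -/
noncomputable def skewX (k A : Type*) [Field k] [CommRing A] [Algebra k A]
    (σ : A ≃ₐ[k] A) : ↥(SkewPolyAlg k A σ) :=
  ⟨skewOp k A σ 1 1, Algebra.subset_adjoin ⟨(1, 1), rfl⟩⟩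

/-- The constant skew polynomial `a ∈ A`, as an element of `A[x,σ]`. -/
noncomputable def skewC (k A : Type*) [Field k] [CommRing A] [Algebra k A]
    (σ : A ≃ₐ[k] A) (a : A) : ↥(SkewPolyAlg k A σ) :=
  ⟨skewOp k A σ a 0, Algebra.subset_adjoin ⟨(a, 0), rfl⟩⟩

section Aux

variable {k A : Type u} [Field k] [CommRing A] [Algebra k A] (σ : A ≃ₐ[k] A)

theorem skewOp_single (a : A) (i j : ℕ) (b : A) :
    skewOp k A σ a i (Finsupp.single j b) = Finsupp.single (j + i) (a * (σ ^ i) b) := by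
  simp only [skewOp, LinearMap.coe_comp, Function.comp_apply,
    Finsupp.mapRange.linearMap_apply, Finsupp.mapRange_single, Finsupp.lmapDomain_apply,
    Finsupp.mapDomain_single, Algebra.coe_lmul_eq_mul, LinearMap.mul_apply', AlgEquiv.toLinearMap_apply]

theorem pow_apply_pow (i j : ℕ) (c : A) : (σ ^ i) ((σ ^ j) c) = (σ ^ (j + i)) c := by
  rw [add_comm, pow_add, AlgEquiv.mul_apply]

theorem skewOp_mul (a b : A) (i j : ℕ) :
    skewOp k A σ a i * skewOp k A σ b j = skewOp k A σ (a * (σ ^ i) b) (j + i) := by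
  apply Finsupp.lhom_ext
  intro m c
  simp only [Module.End.mul_apply, skewOp_single, map_mul, pow_apply_pow, mul_assoc, add_assoc]

theorem skewOp_one_zero : skewOp k A σ 1 0 = 1 := by
  apply Finsupp.lhom_ext
  intro m c
  simp [skewOp_single]

theorem skewOp_add_left (a b : A) (i : ℕ) :
    skewOp k A σ (a + b) i = skewOp k A σ a i + skewOp k A σ b i := by
  apply Finsupp.lhom_ext
  intro m c
  simp only [skewOp_single, add_mul, Finsupp.single_add, LinearMap.add_apply]

theorem skewOp_smul_left (c : k) (a : A) (i : ℕ) :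
    skewOp k A σ (c • a) i = c • skewOp k A σ a i := by
  apply Finsupp.lhom_ext
  intro m b
  simp only [skewOp_single, smul_mul_assoc, Finsupp.smul_single, LinearMap.smul_apply]

theorem skewOp_zero_left (i : ℕ) : skewOp k A σ 0 i = 0 := by
  apply Finsupp.lhom_ext
  intro m b
  simp only [skewOp_single, zero_mul, Finsupp.single_zero, LinearMap.zero_apply]

end Aux

section Aux2

variable {k A : Type u} [Field k] [CommRing A] [Algebra k A] (σ : A ≃ₐ[k] A)

/-- The skew monomial `a·xⁱ` as an element of the skew polynomial algebra. -/
noncomputable def skewM (a : A) (i : ℕ) : ↥(SkewPolyAlg k A σ) :=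
  ⟨skewOp k A σ a i, Algebra.subset_adjoin ⟨(a, i), rfl⟩⟩

theorem skewM_mul (a b : A) (i j : ℕ) :
    skewM σ a i * skewM σ b j = skewM σ (a * (σ ^ i) b) (j + i) :=
  Subtype.ext (skewOp_mul σ a b i j)

theorem skewM_one : skewM σ 1 0 = 1 := Subtype.ext (skewOp_one_zero σ)

theorem skewC_eq (a : A) : skewC k A σ a = skewM σ a 0 := rfl

theorem skewX_eq : skewX k A σ = skewM σ 1 1 := rfl

theorem skewX_pow (i : ℕ) : skewX k A σ ^ i = skewM σ 1 i := by
  induction i with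
  | zero => rw [pow_zero, skewM_one]
  | succ n ih =>
      rw [pow_succ, ih, skewX_eq, skewM_mul, one_mul, map_one, Nat.add_comm]

theorem skewC_mul_skewX_pow (a : A) (i : ℕ) :
    skewC k A σ a * skewX k A σ ^ i = skewM σ a i := by
  rw [skewX_pow, skewC_eq, skewM_mul, map_one, mul_one, add_zero]

theorem skewC_add (a b : A) : skewC k A σ (a + b) = skewC k A σ a + skewC k A σ b :=
  Subtype.ext (skewOp_add_left σ a b 0)

theorem skewC_smul (c : k) (a : A) : skewC k A σ (c • a) = c • skewC k A σ a :=
  Subtype.ext (skewOp_smul_left σ c a 0)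

theorem skewC_zero : skewC k A σ 0 = 0 :=
  Subtype.ext (skewOp_zero_left σ 0)

/-- Sum-of-coefficients map. -/
noncomputable def Tmap (k A : Type u) [Field k] [CommRing A] [Algebra k A] :
    (ℕ →₀ A) →ₗ[k] A :=
  Finsupp.lsum k fun _ => LinearMap.id

theorem Tmap_single (j : ℕ) (b : A) : Tmap k A (Finsupp.single j b) = b := by
  simp [Tmap]

/-- Insertion at degree 0. -/
noncomputable def ιmap (k A : Type u) [Field k] [CommRing A] [Algebra k A] :
    A →ₗ[k] (ℕ →₀ A) := Finsupp.lsingle 0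

theorem Tmap_ιmap (b : A) : Tmap k A (ιmap k A b) = b := by
  simp [ιmap, Tmap_single]

theorem Tmap_skewOp (a : A) (i : ℕ) (f : ℕ →₀ A) :
    Tmap k A (skewOp k A σ a i f) = a * (σ ^ i) (Tmap k A f) := by
  have : Tmap k A ∘ₗ skewOp k A σ a i =
      (Algebra.lmul k A a ∘ₗ ((σ ^ i : A ≃ₐ[k] A)).toLinearMap) ∘ₗ
        Tmap k A := by
    apply Finsupp.lhom_ext
    intro m c
    simp only [LinearMap.coe_comp, Function.comp_apply, skewOp_single, Tmap_single,
      Algebra.coe_lmul_eq_mul, LinearMap.mul_apply', AlgEquiv.toLinearMap_apply]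
  exact LinearMap.congr_fun this f

theorem key_intertwine : ∀ (u : Module.End k (ℕ →₀ A)), u ∈ SkewPolyAlg k A σ →
    ∀ f : ℕ →₀ A, Tmap k A (u f) = Tmap k A (u (ιmap k A (Tmap k A f))) := by
  intro u hu
  induction hu using Algebra.adjoin_induction with
  | mem x hx =>
      obtain ⟨⟨a, i⟩, rfl⟩ := hx
      intro f
      rw [Tmap_skewOp, Tmap_skewOp, Tmap_ιmap]
  | algebraMap r =>
      intro f
      rw [Module.algebraMap_end_apply, Module.algebraMap_end_apply, map_smul, map_smul,
        Tmap_ιmap]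
  | add x y hx hy ihx ihy =>
      intro f
      rw [LinearMap.add_apply, LinearMap.add_apply, map_add, map_add, ihx, ihy]
  | mul x y hx hy ihx ihy =>
      intro f
      rw [Module.End.mul_apply, Module.End.mul_apply, ihx, ihx (y (ιmap k A (Tmap k A f))), ihy]

/-- The evaluation algebra homomorphism `A[x,σ] → End_k A`. -/
noncomputable def phiMap : ↥(SkewPolyAlg k A σ) →ₐ[k] Module.End k A where
  toFun u := Tmap k A ∘ₗ (u : Module.End k (ℕ →₀ A)) ∘ₗ ιmap k A
  map_one' := by
    ext b
    simp [Tmap_ιmap]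
  map_mul' u v := by
    ext b
    simp only [LinearMap.coe_comp, Function.comp_apply, MulMemClass.coe_mul,
      Module.End.mul_apply]
    rw [key_intertwine σ (u : Module.End k (ℕ →₀ A)) u.2 ((v : Module.End k (ℕ →₀ A)) (ιmap k A b))]
  map_zero' := by
    ext b
    simp
  map_add' u v := by
    ext b
    simp
  commutes' c := by
    ext b
    simp [Module.algebraMap_end_apply, Tmap_ιmap]

theorem phiMap_skewM (a : A) (i : ℕ) :
    phiMap σ (skewM σ a i) = Algebra.lmul k A a ∘ₗ ((σ ^ i : A ≃ₐ[k] A)).toLinearMap := by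
  ext b
  simp only [phiMap, AlgHom.coe_mk, RingHom.coe_mk, MonoidHom.coe_mk, OneHom.coe_mk,
    LinearMap.coe_comp, Function.comp_apply, skewM, ιmap, Finsupp.lsingle_apply]
  rw [skewOp_single, Tmap_single]
  simp [Algebra.coe_lmul_eq_mul, LinearMap.mul_apply']

theorem phiMap_skewC (a : A) : phiMap σ (skewC k A σ a) = Algebra.lmul k A a := by
  rw [skewC_eq, phiMap_skewM]
  ext b
  simp

theorem phiMap_skewX : phiMap σ (skewX k A σ) = σ.toLinearMap := by
  rw [skewX_eq, phiMap_skewM]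
  ext b
  simp

end Aux2

section Crux

variable {k A : Type u} [Field k] [CommRing A] [Algebra k A]

theorem crux (σ : A ≃ₐ[k] A) (hGal : IsGaloisAlgebra k A σ) {t : ℕ}
    (ht : ¬ Module.finrank k A ∣ t) {x : A}
    (hx : ∀ b : A, x * ((σ ^ t) b - b) = 0) : x = 0 := by
  haveI := hGal.finiteDimensional
  haveI : Algebra.FormallyEtale k A := hGal.formallyEtale
  haveI : IsReduced A := Algebra.FormallyUnramified.isReduced_of_field k A
  haveI : IsArtinianRing A := isArtinian_of_tower k inferInstance
  haveI : IsSemisimpleRing A := IsArtinianRing.isSemisimpleRing_of_isReduced A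
  set r := Module.finrank k A with hr
  have hr1 : 1 < r := hGal.one_lt_finrank
  haveI : Nontrivial A := by
    rcases subsingleton_or_nontrivial A with h | h
    · have h0 := Module.finrank_zero_of_subsingleton (R := k) (M := A)
      rw [← hr] at h0; omega
    · exact h
  by_contra hx0
  set I : Ideal A :=
    { carrier := {y | ∀ b : A, y * ((σ ^ t) b - b) = 0}
      add_mem' := by intro y z hy hz b; rw [add_mul, hy b, hz b, add_zero]
      zero_mem' := by intro b; rw [zero_mul]
      smul_mem' := by intro c y hy b; simp only [Set.mem_setOf_eq, smul_eq_mul] at *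
                      rw [mul_assoc, hy b, mul_zero] } with hIdef
  have hxI : x ∈ I := hx
  obtain ⟨J, hIJ⟩ := exists_isCompl I
  have h1IJ : (1 : A) ∈ I ⊔ J := by rw [hIJ.sup_eq_top]; exact Submodule.mem_top
  obtain ⟨e, he, f, hf, hef⟩ := Submodule.mem_sup.mp h1IJ
  have hmul : ∀ y ∈ I, y * e = y := by
    intro y hy
    have h1 : y * f ∈ J := J.mul_mem_left y hf
    have hy1 : y * e + y * f = y := by rw [← mul_add, hef, mul_one]
    have hyf : y * f = y - y * e := by linear_combination hy1
    have h2 : y * f ∈ I := by rw [hyf]; exact I.sub_mem hy (I.mul_mem_left y he)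
    have h3 : y * f ∈ I ⊓ J := ⟨h2, h1⟩
    rw [hIJ.inf_eq_bot, Submodule.mem_bot] at h3
    rw [h3, add_zero] at hy1
    exact hy1
  have hee : e * e = e := hmul e he
  have hxe : x * e = x := hmul x hxI
  have hene : e ≠ 0 := by intro h0; rw [h0, mul_zero] at hxe; exact hx0 hxe.symm
  have heb : ∀ b : A, e * ((σ ^ t) b - b) = 0 := he
  -- all σ-translates of e lie in I
  have hσe : ∀ j : ℕ, (σ ^ j) e ∈ I := by
    intro j b
    have h1 := heb ((σ ^ j).symm b)
    have h2 := congrArg (σ ^ j) h1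
    rw [map_mul, map_sub, map_zero] at h2
    rw [pow_apply_pow σ j t, Nat.add_comm, ← pow_apply_pow σ t j,
      AlgEquiv.apply_symm_apply] at h2
    exact h2
  haveI : NeZero r := ⟨by omega⟩
  haveI : Fact (1 < r) := ⟨hr1⟩
  set w : A := ∏ j : ZMod r, (σ ^ (j.val : ℕ)) (1 - e) with hw
  have hpow : ∀ j : ZMod r, σ ((σ ^ j.val) (1 - e)) = (σ ^ (j + 1 : ZMod r).val) (1 - e) := by
    intro j
    have h1 : σ ((σ ^ j.val) (1 - e)) = (σ ^ (j.val + 1)) (1 - e) := by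
      have := pow_apply_pow σ 1 j.val (1 - e)
      rwa [pow_one] at this
    have horder : orderOf σ = r := hGal.orderOf_eq
    have hthis : σ ^ ((j.val + 1) % r) = σ ^ (j.val + 1) := by
      have h2 := pow_mod_orderOf σ (j.val + 1)
      rwa [horder] at h2
    rw [h1, ZMod.val_add, ZMod.val_one]
    exact (DFunLike.congr_fun hthis (1 - e)).symm
  have hσw : σ w = w := by
    rw [hw, map_prod]
    calc ∏ j : ZMod r, σ ((σ ^ (j.val : ℕ)) (1 - e))
        = ∏ j : ZMod r, (σ ^ ((j + 1 : ZMod r).val : ℕ)) (1 - e) := by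
          exact Finset.prod_congr rfl fun j _ => hpow j
      _ = ∏ j : ZMod r, (σ ^ (j.val : ℕ)) (1 - e) := by
          exact Fintype.prod_equiv (Equiv.addRight (1 : ZMod r)) _ _ fun j => rfl
  obtain ⟨c, hc⟩ := (hGal.fixed_iff w).mp hσw
  have hww : w * w = w := by
    rw [hw, ← Finset.prod_mul_distrib]
    refine Finset.prod_congr rfl fun j _ => ?_
    rw [← map_mul]
    congr 1
    linear_combination hee
  have hcc : c = 0 ∨ c = 1 := by
    have hinj : Function.Injective (algebraMap k A) := (algebraMap k A).injective
    have : algebraMap k A (c * c) = algebraMap k A c := by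
      rw [map_mul, hc, hww]
    exact IsIdempotentElem.iff_eq_zero_or_one.mp (hinj this)
  rcases hcc with hc0 | hc1
  · -- w = 0 : then 1 ∈ I, so σ^t = 1, contradiction
    have hw0 : w = 0 := by rw [← hc, hc0, map_zero]
    have hq : (1 : A ⧸ I) = 0 := by
      have : Ideal.Quotient.mk I w = ∏ j : ZMod r, (1 - Ideal.Quotient.mk I ((σ ^ (j.val : ℕ)) e)) := by
        rw [hw, map_prod]
        exact Finset.prod_congr rfl fun j _ => by simp [map_sub, map_one]
      rw [hw0, map_zero] at this
      have h2 : ∀ j : ZMod r, Ideal.Quotient.mk I ((σ ^ (j.val : ℕ)) e) = 0 := fun j =>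
        Ideal.Quotient.eq_zero_iff_mem.mpr (hσe j.val)
      simp only [h2, sub_zero, Finset.prod_const_one] at this
      exact this.symm
    have h1I : (1 : A) ∈ I := by
      rwa [← Ideal.Quotient.eq_zero_iff_mem]
    have hσt : (σ ^ t : A ≃ₐ[k] A) = 1 := by
      ext b
      have := h1I b
      rw [one_mul, sub_eq_zero] at this
      simpa using this
    have := orderOf_dvd_of_pow_eq_one hσt
    rw [hGal.orderOf_eq] at this
    exact ht this
  · -- w = 1 : then e = 0, contradiction
    have hw1 : w = 1 := by rw [← hc, hc1, map_one]
    have hew : e * w = 0 := by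
      rw [hw, ← Finset.mul_prod_erase Finset.univ _ (Finset.mem_univ (0 : ZMod r)),
        ← mul_assoc]
      have h0 : (σ ^ ((0 : ZMod r).val : ℕ)) (1 - e) = 1 - e := by
        rw [ZMod.val_zero, pow_zero]; rfl
      rw [h0]
      have : e * (1 - e) = 0 := by rw [mul_sub, mul_one, hee, sub_self]
      rw [this, zero_mul]
    rw [hw1, mul_one] at hew
    exact hene hew

end Crux

section Ind

variable {k A : Type u} [Field k] [CommRing A] [Algebra k A]

theorem ind (σ : A ≃ₐ[k] A) (hGal : IsGaloisAlgebra k A σ) :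
    ∀ s : Finset ℕ, (∀ i ∈ s, i < Module.finrank k A) → ∀ a : ℕ → A,
      (∀ c : A, ∑ i ∈ s, a i * (σ ^ i) c = 0) → ∀ i ∈ s, a i = 0 := by
  set r := Module.finrank k A with hr
  have hσr : σ ^ r = 1 := by
    have := pow_orderOf_eq_one σ
    rwa [hGal.orderOf_eq] at this
  intro s
  induction s using Finset.strongInduction with
  | _ s IH =>
    intro hbound a hrel
    rcases Finset.eq_empty_or_nonempty s with rfl | ⟨i0, hi0⟩
    · intro i hi; exact absurd hi (by simp)
    have key : ∀ b : A, ∀ i' ∈ s.erase i0, a i' * ((σ ^ i') b - (σ ^ i0) b) = 0 := by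
      intro b
      refine IH (s.erase i0) (Finset.erase_ssubset hi0)
        (fun j hj => hbound j (Finset.mem_of_mem_erase hj))
        (fun j => a j * ((σ ^ j) b - (σ ^ i0) b)) ?_
      intro c
      have h1 := hrel (b * c)
      have h2 := hrel c
      have h3 : ∑ j ∈ s, (a j * ((σ ^ j) b - (σ ^ i0) b)) * (σ ^ j) c =
          (∑ j ∈ s, a j * (σ ^ j) (b * c)) - (σ ^ i0) b * ∑ j ∈ s, a j * (σ ^ j) c := by
        rw [Finset.mul_sum, ← Finset.sum_sub_distrib]
        refine Finset.sum_congr rfl fun j _ => ?_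
        rw [map_mul]
        ring
      rw [Finset.sum_erase _ (by simp)]
      rw [h3, h1, h2, mul_zero, sub_zero]
    have hzero : ∀ i' ∈ s.erase i0, a i' = 0 := by
      intro i' hi'
      have hi'r : i' < r := hbound i' (Finset.mem_of_mem_erase hi')
      have hi0r : i0 < r := hbound i0 hi0
      have hne : i' ≠ i0 := (Finset.mem_erase.mp hi').1
      refine crux σ hGal (t := i' + (r - i0)) ?_ ?_
      · rintro ⟨m, hm⟩
        rw [← hr] at hm
        have hm2 : m < 2 := by
          by_contra hm2
          have h2r : 2 * r ≤ r * m := by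
            calc 2 * r = r * 2 := by ring
            _ ≤ r * m := Nat.mul_le_mul_left r (by omega)
          omega
        interval_cases m <;> omega
      · intro b
        have h1 := key ((σ ^ i0).symm b) i' hi'
        have h2 : (σ ^ i0) ((σ ^ i0).symm b) = b := AlgEquiv.apply_symm_apply _ b
        have hsym : ((σ ^ i0).symm b) = (σ ^ (r - i0)) b := by
          apply (σ ^ i0).injective
          rw [h2, pow_apply_pow]
          have hri : (r - i0) + i0 = r := by omega
          rw [hri, hσr]
          rfl
        have h3 : (σ ^ i') ((σ ^ i0).symm b) = (σ ^ (i' + (r - i0))) b := by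
          rw [hsym, pow_apply_pow, Nat.add_comm]
        rw [h3, h2] at h1
        exact h1
    intro i hi
    by_cases hii : i = i0
    · subst hii
      have hsum : ∑ j ∈ s, a j * (σ ^ j) (1 : A) = a i := by
        rw [← Finset.add_sum_erase _ _ hi]
        have hz : ∀ j ∈ s.erase i, a j * (σ ^ j) (1 : A) = 0 := fun j hj => by
          rw [hzero j hj, zero_mul]
        rw [Finset.sum_eq_zero hz, add_zero, map_one, mul_one]
      rw [hrel 1] at hsum
      exact hsum.symm
    · exact hzero i (Finset.mem_erase.mpr ⟨hii, hi⟩)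

end Ind

section Span

variable {k A : Type u} [Field k] [CommRing A] [Algebra k A]

theorem algEquiv_toLinearMap_pow (σ : A ≃ₐ[k] A) (n : ℕ) :
    (σ.toLinearMap : Module.End k A) ^ n = ((σ ^ n : A ≃ₐ[k] A)).toLinearMap := by
  induction n with
  | zero =>
      ext b
      simp
  | succ m ih =>
      rw [pow_succ, ih]
      ext b
      simp only [Module.End.mul_apply, AlgEquiv.toLinearMap_apply, pow_succ,
        AlgEquiv.mul_apply]

theorem span_top (σ : A ≃ₐ[k] A) (hGal : IsGaloisAlgebra k A σ) (F : Module.End k A) :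
    ∃ a : Fin (Module.finrank k A) → A,
      F = ∑ i : Fin (Module.finrank k A),
        Algebra.lmul k A (a i) ∘ₗ ((σ ^ (i : ℕ) : A ≃ₐ[k] A)).toLinearMap := by
  classical
  haveI := hGal.finiteDimensional
  set r := Module.finrank k A with hr
  set Ψ : (Fin r → A) →ₗ[k] Module.End k A :=
    { toFun := fun a => ∑ i : Fin r,
        Algebra.lmul k A (a i) ∘ₗ ((σ ^ (i : ℕ) : A ≃ₐ[k] A)).toLinearMap
      map_add' := by
        intro a b
        rw [← Finset.sum_add_distrib]
        exact Finset.sum_congr rfl fun i _ => by rw [Pi.add_apply, map_add, LinearMap.add_comp]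
      map_smul' := by
        intro c a
        rw [Finset.smul_sum]
        exact Finset.sum_congr rfl fun i _ => by
          rw [Pi.smul_apply, map_smul, LinearMap.smul_comp, RingHom.id_apply] } with hΨ
  have hΨapp : ∀ (a : Fin r → A) (c : A), Ψ a c = ∑ i : Fin r, a i * (σ ^ (i : ℕ)) c := by
    intro a c
    rw [hΨ]
    simp only [LinearMap.coe_mk, AddHom.coe_mk, LinearMap.sum_apply, LinearMap.coe_comp,
      Function.comp_apply, AlgEquiv.toLinearMap_apply, Algebra.coe_lmul_eq_mul,
      LinearMap.mul_apply']
  have hinj : Function.Injective Ψ := by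
    rw [injective_iff_map_eq_zero]
    intro a ha
    have hcoef : ∀ c : A,
        ∑ i ∈ Finset.range r, (fun n => if h : n < r then a ⟨n, h⟩ else 0) i * (σ ^ i) c = 0 := by
      intro c
      have h1 : Ψ a c = 0 := by rw [ha]; rfl
      rw [hΨapp] at h1
      have h2 : ∑ i ∈ Finset.range r, (fun n => if h : n < r then a ⟨n, h⟩ else 0) i * (σ ^ i) c
          = ∑ i : Fin r, a i * (σ ^ (i : ℕ)) c := by
        rw [← Fin.sum_univ_eq_sum_range]
        refine Finset.sum_congr rfl fun i _ => ?_
        dsimp only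
        rw [dif_pos i.isLt]
      rw [h2]
      exact h1
    have h0 := ind σ hGal (Finset.range r) (fun i hi => Finset.mem_range.mp hi) _ hcoef
    funext i
    have h3 := h0 (i : ℕ) (Finset.mem_range.mpr i.isLt)
    simp only [dif_pos i.isLt] at h3
    simpa using h3
  have hfr : Module.finrank k ↥(LinearMap.range Ψ) = Module.finrank k (Module.End k A) := by
    rw [LinearMap.finrank_range_of_inj hinj]
    rw [Module.finrank_linearMap]
    rw [Module.finrank_pi_fintype k, Finset.sum_const, Finset.card_univ, Fintype.card_fin,
      smul_eq_mul, ← hr]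
  have htop : LinearMap.range Ψ = ⊤ := Submodule.eq_top_of_finrank_eq hfr
  have hF : F ∈ LinearMap.range Ψ := by rw [htop]; exact Submodule.mem_top
  obtain ⟨a, ha⟩ := hF
  exact ⟨a, ha.symm⟩

end Span

section NF

variable {k A : Type u} [Field k] [CommRing A] [Algebra k A]

theorem closure_monomial (σ : A ≃ₐ[k] A) :
    ∀ z ∈ Submonoid.closure (Set.range fun p : A × ℕ => skewOp k A σ p.1 p.2),
      ∃ a i, z = skewOp k A σ a i := by
  intro z hz
  induction hz using Submonoid.closure_induction with
  | mem x hx =>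
      obtain ⟨⟨a, i⟩, rfl⟩ := hx
      exact ⟨a, i, rfl⟩
  | one => exact ⟨1, 0, (skewOp_one_zero σ).symm⟩
  | mul x y hx hy ihx ihy =>
      obtain ⟨a, i, rfl⟩ := ihx
      obtain ⟨b, j, rfl⟩ := ihy
      exact ⟨a * (σ ^ i) b, j + i, skewOp_mul σ a b i j⟩

theorem skewM_reduce (σ : A ≃ₐ[k] A) (hr0 : 0 < Module.finrank k A) (a : A) :
    ∀ i : ℕ, skewM σ a i - skewM σ a (i % Module.finrank k A) ∈
      TwoSidedIdeal.span {skewX k A σ ^ (Module.finrank k A) - 1} := by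
  intro i
  induction i using Nat.strong_induction_on with
  | _ i IH =>
    by_cases hilt : i < Module.finrank k A
    · rw [Nat.mod_eq_of_lt hilt, sub_self]
      exact TwoSidedIdeal.zero_mem _
    · push_neg at hilt
      have h1 : skewM σ a i - skewM σ a (i - Module.finrank k A) =
          skewM σ a (i - Module.finrank k A) * (skewX k A σ ^ (Module.finrank k A) - 1) := by
        rw [mul_sub, mul_one, skewX_pow, skewM_mul, map_one, mul_one]
        congr 2
        omega
      have h2 : skewM σ a i - skewM σ a (i - Module.finrank k A) ∈
          TwoSidedIdeal.span {skewX k A σ ^ (Module.finrank k A) - 1} := by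
        rw [h1]
        exact TwoSidedIdeal.mul_mem_left _ _ _ (TwoSidedIdeal.subset_span rfl)
      have h3 := IH (i - Module.finrank k A) (by omega)
      have h4 : i % Module.finrank k A = (i - Module.finrank k A) % Module.finrank k A :=
        Nat.mod_eq_sub_mod hilt
      have h5 := TwoSidedIdeal.add_mem _ h2 (h4 ▸ h3)
      rwa [sub_add_sub_cancel] at h5

set_option synthInstance.maxHeartbeats 1000000 in
set_option maxHeartbeats 1000000 in
theorem normal_form (σ : A ≃ₐ[k] A) (hGal : IsGaloisAlgebra k A σ) :
    ∀ u : ↥(SkewPolyAlg k A σ), ∃ a : Fin (Module.finrank k A) → A,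
      u - (∑ j : Fin (Module.finrank k A), skewC k A σ (a j) * skewX k A σ ^ (j : ℕ))
        ∈ TwoSidedIdeal.span {skewX k A σ ^ (Module.finrank k A) - 1} := by
  classical
  have hr1 : 1 < Module.finrank k A := hGal.one_lt_finrank
  intro u
  have hmem : (u : Module.End k (ℕ →₀ A)) ∈ Submodule.span k
      ((Submonoid.closure (Set.range fun p : A × ℕ => skewOp k A σ p.1 p.2) :
        Submonoid (Module.End k (ℕ →₀ A))) : Set (Module.End k (ℕ →₀ A))) := by
    have h0 : (u : Module.End k (ℕ →₀ A)) ∈ Subalgebra.toSubmodule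
        (Algebra.adjoin k (Set.range fun p : A × ℕ => skewOp k A σ p.1 p.2)) := u.2
    rw [Algebra.adjoin_eq_span] at h0
    exact h0
  have main : ∀ z : Module.End k (ℕ →₀ A), z ∈ Submodule.span k
      ((Submonoid.closure (Set.range fun p : A × ℕ => skewOp k A σ p.1 p.2) :
        Submonoid (Module.End k (ℕ →₀ A))) : Set (Module.End k (ℕ →₀ A))) →
      ∃ hz' : z ∈ SkewPolyAlg k A σ, ∃ a : Fin (Module.finrank k A) → A,
        (⟨z, hz'⟩ : ↥(SkewPolyAlg k A σ)) -
          (∑ j : Fin (Module.finrank k A), skewC k A σ (a j) * skewX k A σ ^ (j : ℕ))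
            ∈ TwoSidedIdeal.span {skewX k A σ ^ (Module.finrank k A) - 1} := by
    intro z hz
    induction hz using Submodule.span_induction with
    | mem x hx =>
        obtain ⟨a, i, rfl⟩ := closure_monomial σ x hx
        refine ⟨Algebra.subset_adjoin ⟨(a, i), rfl⟩,
          fun j => if (j : ℕ) = i % Module.finrank k A then a else 0, ?_⟩
        have hir : i % Module.finrank k A < Module.finrank k A := Nat.mod_lt _ (by omega)
        have hsum : (∑ j : Fin (Module.finrank k A),
            skewC k A σ (if (j : ℕ) = i % Module.finrank k A then a else 0) *
              skewX k A σ ^ (j : ℕ)) = skewM σ a (i % Module.finrank k A) := by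
          rw [Fintype.sum_eq_single (⟨i % Module.finrank k A, hir⟩ : Fin (Module.finrank k A))]
          · rw [if_pos rfl, skewC_mul_skewX_pow]
          · intro j hj
            rw [if_neg (fun hji => hj (Fin.ext hji)), skewC_zero, zero_mul]
        rw [hsum]
        have hformal : (⟨skewOp k A σ a i, Algebra.subset_adjoin ⟨(a, i), rfl⟩⟩ :
            ↥(SkewPolyAlg k A σ)) = skewM σ a i := rfl
        rw [hformal]
        exact skewM_reduce σ (by omega) a i
    | zero =>
        refine ⟨zero_mem _, 0, ?_⟩
        have h1 : (∑ j : Fin (Module.finrank k A),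
            skewC k A σ ((0 : Fin (Module.finrank k A) → A) j) * skewX k A σ ^ (j : ℕ)) = 0 := by
          refine Finset.sum_eq_zero fun j _ => ?_
          rw [Pi.zero_apply, skewC_zero, zero_mul]
        rw [h1]
        have h2 : (⟨(0 : Module.End k (ℕ →₀ A)), zero_mem _⟩ : ↥(SkewPolyAlg k A σ)) = 0 := rfl
        rw [h2, sub_zero]
        exact TwoSidedIdeal.zero_mem _
    | add x y hx hy ihx ihy =>
        obtain ⟨hx', ax, hax⟩ := ihx
        obtain ⟨hy', ay, hay⟩ := ihy
        refine ⟨add_mem hx' hy', ax + ay, ?_⟩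
        have h2 : (⟨x + y, add_mem hx' hy'⟩ : ↥(SkewPolyAlg k A σ)) =
            ⟨x, hx'⟩ + ⟨y, hy'⟩ := rfl
        have h3 : (∑ j : Fin (Module.finrank k A),
            skewC k A σ ((ax + ay) j) * skewX k A σ ^ (j : ℕ)) =
            (∑ j : Fin (Module.finrank k A), skewC k A σ (ax j) * skewX k A σ ^ (j : ℕ)) +
            (∑ j : Fin (Module.finrank k A), skewC k A σ (ay j) * skewX k A σ ^ (j : ℕ)) := by
          rw [← Finset.sum_add_distrib]
          refine Finset.sum_congr rfl fun j _ => ?_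
          rw [Pi.add_apply, skewC_add, add_mul]
        rw [h2, h3]
        have h4 : (⟨x, hx'⟩ : ↥(SkewPolyAlg k A σ)) + ⟨y, hy'⟩ -
            ((∑ j : Fin (Module.finrank k A), skewC k A σ (ax j) * skewX k A σ ^ (j : ℕ)) +
             (∑ j : Fin (Module.finrank k A), skewC k A σ (ay j) * skewX k A σ ^ (j : ℕ))) =
            ((⟨x, hx'⟩ : ↥(SkewPolyAlg k A σ)) -
              ∑ j : Fin (Module.finrank k A), skewC k A σ (ax j) * skewX k A σ ^ (j : ℕ)) +
            ((⟨y, hy'⟩ : ↥(SkewPolyAlg k A σ)) -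
              ∑ j : Fin (Module.finrank k A), skewC k A σ (ay j) * skewX k A σ ^ (j : ℕ)) := by
          abel
        rw [h4]
        exact TwoSidedIdeal.add_mem _ hax hay
    | smul c x hx ih =>
        obtain ⟨hx', ax, hax⟩ := ih
        refine ⟨Subalgebra.smul_mem _ hx' c, c • ax, ?_⟩
        have h2 : (⟨c • x, Subalgebra.smul_mem _ hx' c⟩ : ↥(SkewPolyAlg k A σ)) =
            c • ⟨x, hx'⟩ := rfl
        have h3 : (∑ j : Fin (Module.finrank k A),
            skewC k A σ ((c • ax) j) * skewX k A σ ^ (j : ℕ)) =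
            c • ∑ j : Fin (Module.finrank k A), skewC k A σ (ax j) * skewX k A σ ^ (j : ℕ) := by
          rw [Finset.smul_sum]
          refine Finset.sum_congr rfl fun j _ => ?_
          rw [Pi.smul_apply, skewC_smul, smul_mul_assoc]
        rw [h2, h3, ← smul_sub, Algebra.smul_def]
        exact TwoSidedIdeal.mul_mem_left _ _ _ hax
  obtain ⟨hz', a, ha⟩ := main (u : Module.End k (ℕ →₀ A)) hmem
  have hu : (⟨(u : Module.End k (ℕ →₀ A)), hz'⟩ : ↥(SkewPolyAlg k A σ)) = u :=
    Subtype.ext rfl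
  rw [hu] at ha
  exact ⟨a, ha⟩

end NF

set_option maxHeartbeats 1000000 in
set_option synthInstance.maxHeartbeats 1000000 in
theorem skewPoly_algHom_to_End (k A : Type u) [Field k] [CommRing A] [Algebra k A]
    (σ : A ≃ₐ[k] A) (hGal : IsGaloisAlgebra k A σ) :
    ∃ φ : ↥(SkewPolyAlg k A σ) →ₐ[k] Module.End k A,
      (∀ a : A, φ (skewC k A σ a) = Algebra.lmul k A a) ∧
      φ (skewX k A σ) = σ.toLinearMap ∧
      Function.Surjective φ ∧
      (∀ u : ↥(SkewPolyAlg k A σ), φ u = 0 ↔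
        u ∈ TwoSidedIdeal.span {skewX k A σ ^ (Module.finrank k A) - 1}) := by
  classical
  have hr1 : 1 < Module.finrank k A := hGal.one_lt_finrank
  have hσr : (σ : A ≃ₐ[k] A) ^ (Module.finrank k A) = 1 := by
    have h := pow_orderOf_eq_one σ
    rwa [hGal.orderOf_eq] at h
  refine ⟨phiMap σ, phiMap_skewC σ, phiMap_skewX σ, ?_, ?_⟩
  · -- surjectivity
    intro F
    obtain ⟨a, ha⟩ := span_top σ hGal F
    refine ⟨∑ i : Fin (Module.finrank k A), skewC k A σ (a i) * skewX k A σ ^ (i : ℕ), ?_⟩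
    rw [map_sum, ha]
    exact Finset.sum_congr rfl fun i _ => by rw [skewC_mul_skewX_pow, phiMap_skewM]
  · -- kernel
    have hker : ∀ v, v ∈ TwoSidedIdeal.span {skewX k A σ ^ (Module.finrank k A) - 1} →
        phiMap σ v = 0 := by
      intro v hv
      have hsub : ({skewX k A σ ^ (Module.finrank k A) - 1} : Set ↥(SkewPolyAlg k A σ)) ⊆
          (TwoSidedIdeal.ker (phiMap σ) : Set ↥(SkewPolyAlg k A σ)) := by
        intro y hy
        rw [Set.mem_singleton_iff] at hy
        subst hy
        rw [SetLike.mem_coe, TwoSidedIdeal.mem_ker (phiMap σ), map_sub, map_one, map_pow,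
          phiMap_skewX, algEquiv_toLinearMap_pow, hσr]
        have h1 : ((1 : A ≃ₐ[k] A)).toLinearMap = (1 : Module.End k A) := by
          ext b; simp
        rw [h1, sub_self]
      have h2 := TwoSidedIdeal.mem_span_iff.mp hv (TwoSidedIdeal.ker (phiMap σ)) hsub
      exact (TwoSidedIdeal.mem_ker (phiMap σ)).mp h2
    intro u
    constructor
    · intro hu
      obtain ⟨a, ha⟩ := normal_form σ hGal u
      set m := ∑ j : Fin (Module.finrank k A), skewC k A σ (a j) * skewX k A σ ^ (j : ℕ)
        with hm
      have hm0 : phiMap σ m = 0 := by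
        have h1 := hker _ ha
        rw [map_sub, hu, zero_sub, neg_eq_zero] at h1
        exact h1
      have hphim : phiMap σ m = ∑ j : Fin (Module.finrank k A),
          Algebra.lmul k A (a j) ∘ₗ ((σ ^ (j : ℕ) : A ≃ₐ[k] A)).toLinearMap := by
        rw [hm, map_sum]
        exact Finset.sum_congr rfl fun j _ => by rw [skewC_mul_skewX_pow, phiMap_skewM]
      have hcoef : ∀ c : A, ∑ i ∈ Finset.range (Module.finrank k A),
          (fun n => if h : n < Module.finrank k A then a ⟨n, h⟩ else 0) i * (σ ^ i) c = 0 := by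
        intro c
        have h1 : (phiMap σ m) c = 0 := by rw [hm0]; rfl
        rw [hphim] at h1
        have h2 : (∑ j : Fin (Module.finrank k A),
            Algebra.lmul k A (a j) ∘ₗ ((σ ^ (j : ℕ) : A ≃ₐ[k] A)).toLinearMap) c =
            ∑ j : Fin (Module.finrank k A), a j * (σ ^ (j : ℕ)) c := by
          rw [LinearMap.sum_apply]
          exact Finset.sum_congr rfl fun j _ => by
            rw [LinearMap.comp_apply, AlgEquiv.toLinearMap_apply, Algebra.coe_lmul_eq_mul,
              LinearMap.mul_apply']
        rw [h2] at h1
        have h3 : ∑ i ∈ Finset.range (Module.finrank k A),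
            (fun n => if h : n < Module.finrank k A then a ⟨n, h⟩ else 0) i * (σ ^ i) c =
            ∑ j : Fin (Module.finrank k A), a j * (σ ^ (j : ℕ)) c := by
          rw [← Fin.sum_univ_eq_sum_range]
          refine Finset.sum_congr rfl fun j _ => ?_
          dsimp only
          rw [dif_pos j.isLt]
        rw [h3]
        exact h1
      have h0 := ind σ hGal (Finset.range (Module.finrank k A))
        (fun i hi => Finset.mem_range.mp hi) _ hcoef
      have ha0 : ∀ j : Fin (Module.finrank k A), a j = 0 := by
        intro j
        have h4 := h0 (j : ℕ) (Finset.mem_range.mpr j.isLt)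
        simp only [dif_pos j.isLt] at h4
        simpa using h4
      have hmz : m = 0 := by
        rw [hm]
        refine Finset.sum_eq_zero fun j _ => ?_
        rw [ha0 j, skewC_zero, zero_mul]
      rw [hmz, sub_zero] at ha
      exact ha
    · exact hker u
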